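/- arXiv:1407.4028 — 2 statements merged into one kernel-verified Lean document; each statement's English description precedes it below -/
import Mathlib

section
/- Quasi-boundedness of asymptotically diverging twisted tubes: if ω lies in the open right half-plane, ω ⊆ {t : c < |t| < C} for some 0 < c < C, and |θ'(x1)| → ∞ as |x1| → ∞, then dist(x, ∂Ω) → 0 as |x| → ∞ with x ∈ Ω; i.e., for every ε > 0 there is S > 0 such that every x ∈ Ω with |x| > S satisfies dist(x, ∂Ω) < ε. -/
/-!
Write the tube as `Ω = {p | untwist θ p ∈ ω}`, where `untwist θ` rotates the cross-section of
`p` back by the angle `θ p.1`. Since the cross-section is bounded, a far point `x ∈ Ω` has a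
large axial coordinate `x₁`. There `|θ'|` is large, so by the mean value theorem `θ` turns by
exactly `π` within axial distance `ε / 2` of `x₁`, at some `w`. Rotating by `π` maps `ω`, which
lies in a half-plane, outside of itself, so `(w, x₂, x₃) ∉ Ω`, and the axial segment from `x`
to `(w, x₂, x₃)` meets `∂Ω` within distance `ε / 2` of `x`.
-/

open Set Filter Real

theorem IsPreconnected.inter_frontier_nonempty {X : Type*} [TopologicalSpace X] {s t : Set X}
    (hs : IsPreconnected s) (hst : (s ∩ t).Nonempty) (hst' : (s \ t).Nonempty) :
    (s ∩ frontier t).Nonempty := by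
  by_contra h
  have hcover : s ⊆ interior t ∪ (closure t)ᶜ := fun y hys => by
    by_cases hyt : y ∈ closure t
    · exact Or.inl (by_contra fun hyi => h ⟨y, hys, hyt, hyi⟩)
    · exact Or.inr hyt
  obtain ⟨x, hxs, hxt⟩ := hst
  have hxi : x ∈ interior t := (hcover hxs).resolve_right (not_not.2 (subset_closure hxt))
  have hsi : s ⊆ interior t := hs.subset_left_of_subset_union isOpen_interior
    isClosed_closure.isOpen_compl (disjoint_compl_right_iff_subset.2 interior_subset_closure)
    hcover ⟨x, hxs, hxi⟩
  obtain ⟨y, hys, hyt⟩ := hst'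
  exact hyt (interior_subset (hsi hys))

theorem exists_mem_uIcc_abs_sub_eq_of_le_abs_deriv {f : ℝ → ℝ} (hf : Differentiable ℝ f)
    {a b d : ℝ} (hab : a ≠ b) (hd : 0 ≤ d) (h : ∀ s ∈ uIcc a b, d / |b - a| ≤ |deriv f s|) :
    ∃ w ∈ uIcc a b, |f w - f a| = d := by
  obtain ⟨ξ, hξ, hslope⟩ : ∃ ξ ∈ uIcc a b, deriv f ξ = (f b - f a) / (b - a) := by
    rcases hab.lt_or_gt with hab | hba
    · obtain ⟨ξ, hξ, hslope⟩ := exists_deriv_eq_slope f hab hf.continuous.continuousOn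
        hf.differentiableOn
      exact ⟨ξ, Icc_subset_uIcc (Ioo_subset_Icc_self hξ), hslope⟩
    · obtain ⟨ξ, hξ, hslope⟩ := exists_deriv_eq_slope f hba hf.continuous.continuousOn
        hf.differentiableOn
      refine ⟨ξ, Icc_subset_uIcc' (Ioo_subset_Icc_self hξ), ?_⟩
      rw [hslope, ← neg_sub, ← neg_sub b, neg_div_neg_eq]
  have hgap : d ≤ |f b - f a| := by
    have hξd := h ξ hξ
    rwa [hslope, abs_div, div_le_div_iff_of_pos_right (abs_pos.2 (sub_ne_zero.2 hab.symm))]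
      at hξd
  obtain ⟨v, hv, hva⟩ : ∃ v ∈ uIcc (f a) (f b), |v - f a| = d := by
    rcases le_abs.1 hgap with hup | hdown
    · exact ⟨f a + d, Icc_subset_uIcc ⟨by linarith, by linarith⟩, by simp [abs_of_nonneg hd]⟩
    · exact ⟨f a - d, Icc_subset_uIcc' ⟨by linarith, by linarith⟩, by simp [abs_of_nonneg hd]⟩
  obtain ⟨w, hw, rfl⟩ := intermediate_value_uIcc hf.continuous.continuousOn hv
  exact ⟨w, hw, hva⟩

theorem exists_abs_sub_eq_near_of_tendsto_abs_deriv {f : ℝ → ℝ} (hf : Differentiable ℝ f)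
    (hdiv : Tendsto (fun x => |deriv f x|) (cocompact ℝ) atTop) {d δ : ℝ} (hd : 0 ≤ d)
    (hδ : 0 < δ) : ∃ R, ∀ a, R ≤ |a| → ∃ w, |w - a| ≤ δ ∧ |f w - f a| = d := by
  obtain ⟨R, -, hR⟩ := (Metric.cobounded_eq_cocompact (α := ℝ) ▸
    hasBasis_cobounded_norm).eventually_iff.1 (hdiv.eventually_ge_atTop (d / δ))
  refine ⟨R, fun a ha => ?_⟩
  obtain ⟨b, hba, hb⟩ : ∃ b, |b - a| = δ ∧ ∀ s ∈ uIcc a b, |a| ≤ |s| := by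
    rcases le_total 0 a with ha0 | ha0
    · refine ⟨a + δ, by simp [hδ.le], fun s hs => ?_⟩
      rw [uIcc_of_le (by linarith)] at hs
      rw [abs_of_nonneg ha0, abs_of_nonneg (ha0.trans hs.1)]
      exact hs.1
    · refine ⟨a - δ, by simp [hδ.le], fun s hs => ?_⟩
      rw [uIcc_of_ge (by linarith)] at hs
      rw [abs_of_nonpos ha0, abs_of_nonpos (hs.2.trans ha0)]
      linarith [hs.2]
  obtain ⟨w, hw, hfw⟩ := exists_mem_uIcc_abs_sub_eq_of_le_abs_deriv (a := a) (b := b) hf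
    (by rintro rfl; simp at hba; linarith) hd
    (fun s hs => by rw [hba]; exact hR (ha.trans (hb s hs)))
  exact ⟨w, hba ▸ abs_sub_left_of_mem_uIcc hw, hfw⟩

namespace TwistedTube

noncomputable def twist (θ : ℝ → ℝ) (x : ℝ × ℝ × ℝ) : ℝ × ℝ × ℝ :=
  (x.1, x.2.1 * cos (θ x.1) + x.2.2 * sin (θ x.1), -x.2.1 * sin (θ x.1) + x.2.2 * cos (θ x.1))

noncomputable def untwist (θ : ℝ → ℝ) (p : ℝ × ℝ × ℝ) : ℝ × ℝ :=
  (p.2.1 * cos (θ p.1) - p.2.2 * sin (θ p.1), p.2.1 * sin (θ p.1) + p.2.2 * cos (θ p.1))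

theorem untwist_twist (θ : ℝ → ℝ) (x : ℝ × ℝ × ℝ) : untwist θ (twist θ x) = x.2 := by
  simp only [twist, untwist]
  ext
  · linear_combination x.2.1 * sin_sq_add_cos_sq (θ x.1)
  · linear_combination x.2.2 * sin_sq_add_cos_sq (θ x.1)

theorem twist_fst_untwist (θ : ℝ → ℝ) (p : ℝ × ℝ × ℝ) : twist θ (p.1, untwist θ p) = p := by
  simp only [twist, untwist]
  ext
  · rfl
  · linear_combination p.2.1 * sin_sq_add_cos_sq (θ p.1)
  · linear_combination p.2.2 * sin_sq_add_cos_sq (θ p.1)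

theorem image_twist_univ_prod (θ : ℝ → ℝ) (ω : Set (ℝ × ℝ)) :
    twist θ '' (univ ×ˢ ω) = untwist θ ⁻¹' ω := by
  ext p
  constructor
  · rintro ⟨x, ⟨-, hx⟩, rfl⟩
    rwa [mem_preimage, untwist_twist]
  · exact fun hp => ⟨(p.1, untwist θ p), ⟨mem_univ _, hp⟩, twist_fst_untwist θ p⟩

theorem untwist_fst_sq_add_snd_sq (θ : ℝ → ℝ) (p : ℝ × ℝ × ℝ) :
    (untwist θ p).1 ^ 2 + (untwist θ p).2 ^ 2 = p.2.1 ^ 2 + p.2.2 ^ 2 := by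
  simp only [untwist]
  linear_combination (p.2.1 ^ 2 + p.2.2 ^ 2) * sin_sq_add_cos_sq (θ p.1)

theorem untwist_of_abs_sub_eq_pi {θ : ℝ → ℝ} {w : ℝ} {p : ℝ × ℝ × ℝ}
    (h : |θ w - θ p.1| = π) : untwist θ (w, p.2) = -untwist θ p := by
  obtain hw | hw : θ w = θ p.1 + π ∨ θ w = θ p.1 - π := by
    rcases abs_eq pi_pos.le |>.1 h with h | h
    · exact Or.inl (by linarith)
    · exact Or.inr (by linarith)
  all_goals
    simp only [untwist, hw, cos_add_pi, sin_add_pi, cos_sub_pi, sin_sub_pi]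
    ext <;> simp <;> ring

end TwistedTube

theorem sqrt_sq_add_le_abs_add_sqrt (a : ℝ) {u : ℝ} (hu : 0 ≤ u) : √(a ^ 2 + u) ≤ |a| + √u := by
  rw [sqrt_le_left (by positivity), add_sq, sq_abs, sq_sqrt hu]
  nlinarith [abs_nonneg a, sqrt_nonneg u]

theorem stmt11_general (θ : ℝ → ℝ) (hθ : ContDiff ℝ 1 θ)
    (hdiv : Filter.Tendsto (fun x1 : ℝ => |deriv θ x1|) (Filter.cocompact ℝ)
      Filter.atTop)
    (ω : Set (ℝ × ℝ)) (hωhalf : ω ⊆ {t : ℝ × ℝ | 0 < t.1})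
    (c C : ℝ)
    (hann : ∀ t ∈ ω, c < Real.sqrt (t.1 ^ 2 + t.2 ^ 2) ∧
      Real.sqrt (t.1 ^ 2 + t.2 ^ 2) < C)
    (L : ℝ × ℝ × ℝ → ℝ × ℝ × ℝ)
    (hL : ∀ x : ℝ × ℝ × ℝ, L x =
      (x.1, x.2.1 * Real.cos (θ x.1) + x.2.2 * Real.sin (θ x.1),
        -x.2.1 * Real.sin (θ x.1) + x.2.2 * Real.cos (θ x.1))) :
    ∀ ε > (0 : ℝ), ∃ S > (0 : ℝ), ∀ x ∈ L '' (Set.univ ×ˢ ω),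
      S < Real.sqrt (x.1 ^ 2 + x.2.1 ^ 2 + x.2.2 ^ 2) →
      ∃ y ∈ frontier (L '' (Set.univ ×ˢ ω)),
        Real.sqrt ((x.1 - y.1) ^ 2 + (x.2.1 - y.2.1) ^ 2 + (x.2.2 - y.2.2) ^ 2) < ε := by
  intro ε hε
  obtain rfl : L = TwistedTube.twist θ := funext hL
  rw [TwistedTube.image_twist_univ_prod]
  obtain ⟨R, hR⟩ := exists_abs_sub_eq_near_of_tendsto_abs_deriv (hθ.differentiable one_ne_zero)
    hdiv pi_pos.le (half_pos hε)
  refine ⟨max (R + C) 1, by positivity, fun x hx hfar => ?_⟩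
  have hRx : R ≤ |x.1| := by
    have hxC := (hann _ hx).2
    rw [TwistedTube.untwist_fst_sq_add_snd_sq] at hxC
    have hsplit := sqrt_sq_add_le_abs_add_sqrt x.1 (by positivity : 0 ≤ x.2.1 ^ 2 + x.2.2 ^ 2)
    rw [← add_assoc] at hsplit
    linarith [le_max_left (R + C) 1]
  obtain ⟨w, hwx, hθw⟩ := hR x.1 hRx
  have hw : (w, x.2) ∉ TwistedTube.untwist θ ⁻¹' ω := fun hmem => by
    have hneg : 0 < -(TwistedTube.untwist θ x).1 := by
      simpa [TwistedTube.untwist_of_abs_sub_eq_pi hθw] using hωhalf hmem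
    have hpos : 0 < (TwistedTube.untwist θ x).1 := hωhalf hx
    linarith
  obtain ⟨_, ⟨s, hs, rfl⟩, hfr⟩ := (isPreconnected_uIcc.image (fun s => (s, x.2))
    (by fun_prop)).inter_frontier_nonempty ⟨x, ⟨x.1, left_mem_uIcc, rfl⟩, hx⟩
    ⟨_, ⟨w, right_mem_uIcc, rfl⟩, hw⟩
  refine ⟨(s, x.2), hfr, ?_⟩
  rw [sub_self, sub_self, zero_pow two_ne_zero, add_zero, add_zero, sqrt_sq_eq_abs,
    abs_sub_comm]
  linarith [abs_sub_left_of_mem_uIcc hs]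

/-- Quasi-boundedness of tubes with asymptotically diverging twisting: the Euclidean
distance to the boundary of the twisted tube tends to zero at infinity of the tube. -/
theorem stmt11 (θ : ℝ → ℝ) (hθ : ContDiff ℝ 1 θ)
    (hdiv : Filter.Tendsto (fun x1 : ℝ => |deriv θ x1|) (Filter.cocompact ℝ)
      Filter.atTop)
    (ω : Set (ℝ × ℝ)) (hω : IsOpen ω) (hωhalf : ω ⊆ {t : ℝ × ℝ | 0 < t.1})
    (c C : ℝ) (hc : 0 < c) (hcC : c < C)
    (hann : ∀ t ∈ ω, c < Real.sqrt (t.1 ^ 2 + t.2 ^ 2) ∧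
      Real.sqrt (t.1 ^ 2 + t.2 ^ 2) < C)
    (L : ℝ × ℝ × ℝ → ℝ × ℝ × ℝ)
    (hL : ∀ x : ℝ × ℝ × ℝ, L x =
      (x.1, x.2.1 * Real.cos (θ x.1) + x.2.2 * Real.sin (θ x.1),
        -x.2.1 * Real.sin (θ x.1) + x.2.2 * Real.cos (θ x.1))) :
    ∀ ε > (0 : ℝ), ∃ S > (0 : ℝ), ∀ x ∈ L '' (Set.univ ×ˢ ω),
      S < Real.sqrt (x.1 ^ 2 + x.2.1 ^ 2 + x.2.2 ^ 2) →
      ∃ y ∈ frontier (L '' (Set.univ ×ˢ ω)),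
        Real.sqrt ((x.1 - y.1) ^ 2 + (x.2.1 - y.2.1) ^ 2 + (x.2.2 - y.2.2) ^ 2) < ε :=
  stmt11_general θ hθ hdiv ω hωhalf c C hann L hL
end

section
/- Longitudinal Dirichlet estimate: suppose ω ⊂ {t1 > 0}, θ ∈ C^1(R) and |θ'| > n on {|x1| > s_n}. Let ψ ∈ C_c^∞(Ω). Then for every point (x1, y2, y3) ∈ Ω with |x1| > s_n + π/n, the function s ↦ ψ(x1 + s, y2, y3) vanishes for some s ∈ [−π/n, 0] and for some s ∈ [0, π/n]. Consequently ∫_{|x1|>s_n+π/n, (x1,y)∈Ω} |∂_1 ψ|^2 ≥ (n/2)^2 ∫_{|x1|>s_n+π/n, (x1,y)∈Ω} |ψ|^2. -/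
open MeasureTheory

open Real Set intervalIntegral Filter Function

set_option maxHeartbeats 1000000

/-- One-sided Wirtinger/Poincaré inequality with zero at the right endpoint. -/
lemma wirt_right (c A B : ℝ) (hc : 0 < c) (hAB : A ≤ B)
    (hL : c * (B - A) ≤ Real.pi / 2)
    (f : ℝ → ℝ) (hf : ContDiff ℝ 1 f) (hB : f B = 0) :
    c ^ 2 * ∫ x in A..B, f x ^ 2 ≤ ∫ x in A..B, (deriv f x) ^ 2 := by
  rcases eq_or_lt_of_le hAB with rfl | hlt
  · simp
  have hfd : Differentiable ℝ f := hf.differentiable one_ne_zero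
  have hfc : Continuous f := hfd.continuous
  have hdc : Continuous (deriv f) := hf.continuous_deriv le_rfl
  -- the key estimate on [A, B-ε]
  have key : ∀ ε ∈ Ioo (0:ℝ) (B - A),
      c ^ 2 * ∫ x in A..(B - ε), f x ^ 2 ≤
        (∫ x in A..B, (deriv f x) ^ 2) + (f (B - ε)) ^ 2 / ε := by
    intro ε hε
    obtain ⟨hε0, hεBA⟩ := hε
    have hABe : A ≤ B - ε := by linarith
    -- positivity of sin (c (B - x)) on [A, B - ε]
    have hsin : ∀ x ∈ Icc A (B - ε), 0 < Real.sin (c * (B - x)) := by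
      intro x hx
      apply Real.sin_pos_of_pos_of_lt_pi
      · have : B - x ≥ ε := by have := hx.2; linarith
        nlinarith
      · have h1 : c * (B - x) ≤ c * (B - A) := by
          have := hx.1; nlinarith
        have := Real.pi_pos; linarith
    -- G and its derivative
    set G : ℝ → ℝ := fun x =>
      c * (Real.cos (c * (B - x)) / Real.sin (c * (B - x))) * f x ^ 2 with hG
    set g : ℝ → ℝ := fun x =>
      c ^ 2 * f x ^ 2 / Real.sin (c * (B - x)) ^ 2 +
        2 * c * (Real.cos (c * (B - x)) / Real.sin (c * (B - x))) * f x * deriv f x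
      with hg
    have hGd : ∀ x ∈ Icc A (B - ε), HasDerivAt G (g x) x := by
      intro x hx
      have hsx := hsin x hx
      have h1 : HasDerivAt (fun y : ℝ => c * (B - y)) (-c) x := by
        simpa using ((hasDerivAt_id x).const_sub B).const_mul c
      have hcos : HasDerivAt (fun y : ℝ => Real.cos (c * (B - y)))
          (-Real.sin (c * (B - x)) * (-c)) x := h1.cos
      have hsinD : HasDerivAt (fun y : ℝ => Real.sin (c * (B - y)))
          (Real.cos (c * (B - x)) * (-c)) x := h1.sin
      have hquot : HasDerivAt
          (fun y : ℝ => Real.cos (c * (B - y)) / Real.sin (c * (B - y)))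
          ((-Real.sin (c * (B - x)) * (-c) * Real.sin (c * (B - x)) -
            Real.cos (c * (B - x)) * (Real.cos (c * (B - x)) * (-c))) /
            Real.sin (c * (B - x)) ^ 2) x := hcos.div hsinD hsx.ne'
      have hf2 : HasDerivAt (fun y : ℝ => f y ^ 2)
          (2 * f x * deriv f x) x := by
        have := ((hfd x).hasDerivAt).fun_pow 2
        simpa [mul_comm, mul_assoc, mul_left_comm] using this
      have hcomb := ((hquot.const_mul c).mul hf2)
      set S := Real.sin (c * (B - x)) with hS
      set C := Real.cos (c * (B - x)) with hC
      have hpy : S ^ 2 + C ^ 2 = 1 := Real.sin_sq_add_cos_sq _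
      have harg : -S * -c * S - C * (C * -c) = c := by linear_combination c * hpy
      rw [harg] at hcomb
      refine hcomb.congr_deriv ?_
      have hs2 : S ≠ 0 := hsx.ne'
      simp only [hg, ← hS, ← hC]
      field_simp
    have huIcc : uIcc A (B - ε) = Icc A (B - ε) := uIcc_of_le hABe
    -- continuity of g on the interval
    have hgc : ContinuousOn g (Icc A (B - ε)) := by
      have hcont1 : Continuous fun x : ℝ => c * (B - x) := by continuity
      have hsinC : ContinuousOn (fun x : ℝ => Real.sin (c * (B - x))) (Icc A (B - ε)) :=
        (Real.continuous_sin.comp hcont1).continuousOn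
      have hcosC : ContinuousOn (fun x : ℝ => Real.cos (c * (B - x))) (Icc A (B - ε)) :=
        (Real.continuous_cos.comp hcont1).continuousOn
      have hne : ∀ x ∈ Icc A (B - ε), Real.sin (c * (B - x)) ≠ 0 :=
        fun x hx => (hsin x hx).ne'
      have hne2 : ∀ x ∈ Icc A (B - ε), Real.sin (c * (B - x)) ^ 2 ≠ 0 :=
        fun x hx => pow_ne_zero _ (hne x hx)
      apply ContinuousOn.add
      · exact ((continuous_const.mul (hfc.pow 2)).continuousOn).div
          (hsinC.pow 2) hne2
      · exact ((((continuous_const.continuousOn.mul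
          (hcosC.div hsinC hne)).mul hfc.continuousOn)).mul hdc.continuousOn)
    have hgint : IntervalIntegrable g volume A (B - ε) :=
      (hgc.mono (by rw [huIcc])).intervalIntegrable
    -- FTC
    have hFTC : ∫ x in A..(B - ε), g x = G (B - ε) - G A := by
      apply intervalIntegral.integral_eq_sub_of_hasDerivAt
      · intro x hx
        exact hGd x (huIcc ▸ hx)
      · exact hgint
    -- pointwise inequality
    have hpt : ∀ x ∈ Icc A (B - ε),
        c ^ 2 * f x ^ 2 ≤ (deriv f x) ^ 2 + g x := by
      intro x hx
      have hsx := hsin x hx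
      set S := Real.sin (c * (B - x)) with hS
      set C := Real.cos (c * (B - x)) with hC
      have hpy : S ^ 2 + C ^ 2 = 1 := Real.sin_sq_add_cos_sq _
      have hgx : g x = c ^ 2 * f x ^ 2 / S ^ 2 + 2 * c * (C / S) * f x * deriv f x := rfl
      have hs0 : S ≠ 0 := hsx.ne'
      have hexp : (deriv f x) ^ 2 + g x - c ^ 2 * f x ^ 2 =
          (deriv f x + c * (C / S) * f x) ^ 2 := by
        rw [hgx]
        field_simp
        linear_combination (-(c ^ 2 * f x ^ 2)) * hpy
      have hsq := sq_nonneg (deriv f x + c * (C / S) * f x)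
      rw [← hexp] at hsq
      linarith
    -- integrate the pointwise inequality
    have hint1 : IntervalIntegrable (fun x => c ^ 2 * f x ^ 2) volume A (B - ε) :=
      (continuous_const.mul (hfc.pow 2)).intervalIntegrable _ _
    have hint2 : IntervalIntegrable (fun x => (deriv f x) ^ 2) volume A (B - ε) :=
      (hdc.pow 2).intervalIntegrable _ _
    have hmono : ∫ x in A..(B - ε), c ^ 2 * f x ^ 2 ≤
        ∫ x in A..(B - ε), ((deriv f x) ^ 2 + g x) :=
      intervalIntegral.integral_mono_on hABe hint1 (hint2.add hgint) hpt
    have hsplit : ∫ x in A..(B - ε), ((deriv f x) ^ 2 + g x) =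
        (∫ x in A..(B - ε), (deriv f x) ^ 2) + ∫ x in A..(B - ε), g x :=
      intervalIntegral.integral_add hint2 hgint
    -- enlarge the derivative integral
    have hderle : ∫ x in A..(B - ε), (deriv f x) ^ 2 ≤ ∫ x in A..B, (deriv f x) ^ 2 := by
      have hsplit2 : (∫ x in A..(B - ε), (deriv f x) ^ 2) +
          ∫ x in (B - ε)..B, (deriv f x) ^ 2 = ∫ x in A..B, (deriv f x) ^ 2 :=
        intervalIntegral.integral_add_adjacent_intervals
          ((hdc.pow 2).intervalIntegrable _ _) ((hdc.pow 2).intervalIntegrable _ _)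
      have hnn : 0 ≤ ∫ x in (B - ε)..B, (deriv f x) ^ 2 :=
        intervalIntegral.integral_nonneg (by linarith) (fun x _ => sq_nonneg _)
      linarith
    -- bounds on boundary terms
    have hGA : 0 ≤ G A := by
      have hsA : 0 < Real.sin (c * (B - A)) := hsin A ⟨le_rfl, hABe⟩
      have hcA : 0 ≤ Real.cos (c * (B - A)) := by
        apply Real.cos_nonneg_of_mem_Icc
        constructor
        · have := Real.pi_pos; nlinarith
        · exact hL
      have : 0 ≤ c * (Real.cos (c * (B - A)) / Real.sin (c * (B - A))) :=
        mul_nonneg hc.le (div_nonneg hcA hsA.le)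
      simpa [hG] using mul_nonneg this (sq_nonneg (f A))
    have hGB : G (B - ε) ≤ f (B - ε) ^ 2 / ε := by
      have hεpi : c * ε < Real.pi / 2 := by nlinarith
      have hcos : 0 < Real.cos (c * ε) := by
        apply Real.cos_pos_of_mem_Ioo
        constructor
        · have := Real.pi_pos; nlinarith
        · exact hεpi
      have htan : c * ε < Real.tan (c * ε) := Real.lt_tan (by positivity) hεpi
      have hsinp : 0 < Real.sin (c * ε) := by
        have : B - (B - ε) = ε := by ring
        simpa [this] using hsin (B - ε) ⟨hABe, le_rfl⟩
      have hkey : c * (Real.cos (c * ε) / Real.sin (c * ε)) ≤ 1 / ε := by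
        rw [Real.tan_eq_sin_div_cos] at htan
        have h2 : c * ε * Real.cos (c * ε) < Real.sin (c * ε) :=
          (lt_div_iff₀ hcos).mp htan
        have h3 : c * (Real.cos (c * ε) / Real.sin (c * ε)) =
            (c * Real.cos (c * ε)) / Real.sin (c * ε) := by ring
        rw [h3, div_le_div_iff₀ hsinp hε0]
        nlinarith
      have hBe : B - (B - ε) = ε := by ring
      have : G (B - ε) = c * (Real.cos (c * ε) / Real.sin (c * ε)) * f (B - ε) ^ 2 := by
        simp [hG, hBe]
      rw [this]
      calc c * (Real.cos (c * ε) / Real.sin (c * ε)) * f (B - ε) ^ 2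
          ≤ (1 / ε) * f (B - ε) ^ 2 :=
            mul_le_mul_of_nonneg_right hkey (sq_nonneg _)
        _ = f (B - ε) ^ 2 / ε := by ring
    have hconst : ∫ x in A..(B - ε), c ^ 2 * f x ^ 2 =
        c ^ 2 * ∫ x in A..(B - ε), f x ^ 2 := intervalIntegral.integral_const_mul _ _
    rw [hconst] at hmono
    rw [hsplit, hFTC] at hmono
    linarith
  -- now take the limit ε → 0⁺
  have hBA : (0:ℝ) < B - A := by linarith
  have hcontP : Continuous (fun t : ℝ => ∫ x in A..t, f x ^ 2) :=
    intervalIntegral.continuous_primitive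
      (fun a b => ((hfc.pow 2).intervalIntegrable a b)) A
  have htend0 : Filter.Tendsto (fun ε : ℝ => B - ε) (nhdsWithin 0 (Ioi 0)) (nhds B) := by
    have : Filter.Tendsto (fun ε : ℝ => B - ε) (nhds 0) (nhds (B - 0)) :=
      (continuous_const.sub continuous_id).tendsto 0
    simpa using this.mono_left nhdsWithin_le_nhds
  have h1 : Filter.Tendsto (fun ε : ℝ => c ^ 2 * ∫ x in A..(B - ε), f x ^ 2)
      (nhdsWithin 0 (Ioi 0)) (nhds (c ^ 2 * ∫ x in A..B, f x ^ 2)) :=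
    Filter.Tendsto.const_mul _ ((hcontP.tendsto B).comp htend0)
  -- the boundary term tends to 0
  have hmap : Filter.Tendsto (fun ε : ℝ => B - ε) (nhdsWithin 0 (Ioi 0))
      (nhdsWithin B {B}ᶜ) := by
    apply tendsto_nhdsWithin_of_tendsto_nhds_of_eventually_within _ htend0
    filter_upwards [self_mem_nhdsWithin] with ε (hε : ε ∈ Ioi 0)
    simp only [Set.mem_compl_iff, Set.mem_singleton_iff]
    intro h
    have : ε = 0 := by linarith [sub_eq_self.mp h]
    exact absurd this (ne_of_gt hε)
  have hslope : Filter.Tendsto (fun ε : ℝ => (f (B - ε) - f B) / ((B - ε) - B))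
      (nhdsWithin 0 (Ioi 0)) (nhds (deriv f B)) := by
    have h := hasDerivAt_iff_tendsto_slope.mp (hfd B).hasDerivAt
    have h2 := h.comp hmap
    refine h2.congr fun ε => ?_
    simp [Function.comp, slope_def_field]
  have hfB : Filter.Tendsto (fun ε : ℝ => f (B - ε)) (nhdsWithin 0 (Ioi 0)) (nhds 0) := by
    have := (hfc.tendsto B).comp htend0
    simpa [hB, Function.comp_def] using this
  have hbd : Filter.Tendsto (fun ε : ℝ => f (B - ε) ^ 2 / ε)
      (nhdsWithin 0 (Ioi 0)) (nhds 0) := by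
    have hprod := (hslope.mul hfB).neg
    rw [show -((deriv f B) * 0) = 0 by ring] at hprod
    apply hprod.congr'
    filter_upwards [self_mem_nhdsWithin] with ε (hε : ε ∈ Ioi 0)
    have hε0 : (ε:ℝ) ≠ 0 := ne_of_gt hε
    rw [hB, sub_zero, show B - ε - B = -ε by ring, div_neg, neg_mul, neg_neg,
      div_mul_eq_mul_div, ← sq]
  have h2 : Filter.Tendsto
      (fun ε : ℝ => (∫ x in A..B, (deriv f x) ^ 2) + f (B - ε) ^ 2 / ε)
      (nhdsWithin 0 (Ioi 0)) (nhds ((∫ x in A..B, (deriv f x) ^ 2) + 0)) :=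
    Filter.Tendsto.const_add _ hbd
  have hle : c ^ 2 * ∫ x in A..B, f x ^ 2 ≤ (∫ x in A..B, (deriv f x) ^ 2) + 0 := by
    apply le_of_tendsto_of_tendsto h1 h2
    filter_upwards [Ioo_mem_nhdsGT hBA] with ε hε
    exact key ε hε
  linarith

/-- One-sided Wirtinger/Poincaré inequality with zero at the left endpoint. -/
lemma wirt_left (c A B : ℝ) (hc : 0 < c) (hAB : A ≤ B)
    (hL : c * (B - A) ≤ Real.pi / 2)
    (f : ℝ → ℝ) (hf : ContDiff ℝ 1 f) (hA : f A = 0) :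
    c ^ 2 * ∫ x in A..B, f x ^ 2 ≤ ∫ x in A..B, (deriv f x) ^ 2 := by
  have hfd : Differentiable ℝ f := hf.differentiable one_ne_zero
  set g : ℝ → ℝ := fun x => f (A + B - x) with hgdef
  have hgcd : ContDiff ℝ 1 g := hf.comp ((contDiff_const.sub contDiff_id))
  have hgB : g B = 0 := by simp [hgdef, hA]
  have hgderiv : ∀ x, deriv g x = -deriv f (A + B - x) := by
    intro x
    have h1 : HasDerivAt (fun y : ℝ => A + B - y) (-1) x := by
      simpa using (hasDerivAt_id x).const_sub (A + B)
    have h2 : HasDerivAt f (deriv f (A + B - x)) (A + B - x) := (hfd _).hasDerivAt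
    have h3 := h2.comp x h1
    have : deriv g x = deriv f (A + B - x) * (-1) := h3.deriv
    linarith [this]
  have hw := wirt_right c A B hc hAB hL g hgcd hgB
  have e1 : ∫ x in A..B, g x ^ 2 = ∫ x in A..B, f x ^ 2 := by
    have := intervalIntegral.integral_comp_sub_left (fun u => f u ^ 2) (A + B) (a := A) (b := B)
    simpa [hgdef, show A + B - B = A by ring, show A + B - A = B by ring] using this
  have e2 : ∫ x in A..B, (deriv g x) ^ 2 = ∫ x in A..B, (deriv f x) ^ 2 := by
    have h4 : ∀ x, (deriv g x) ^ 2 = (fun u => (deriv f u) ^ 2) (A + B - x) := by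
      intro x; rw [hgderiv x]; ring
    rw [intervalIntegral.integral_congr (g := fun x => (fun u => (deriv f u) ^ 2) (A + B - x))
      (fun x _ => h4 x)]
    have := intervalIntegral.integral_comp_sub_left (fun u => (deriv f u) ^ 2) (A + B)
      (a := A) (b := B)
    simpa [show A + B - B = A by ring, show A + B - A = B by ring] using this
  rw [e1, e2] at hw
  exact hw

/-- Two-sided Wirtinger/Poincaré inequality with zeros at both endpoints. -/
lemma wirt_two (c A B : ℝ) (hc : 0 < c) (hAB : A ≤ B)
    (hL : c * (B - A) ≤ Real.pi)
    (f : ℝ → ℝ) (hf : ContDiff ℝ 1 f) (hA : f A = 0) (hB : f B = 0) :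
    c ^ 2 * ∫ x in A..B, f x ^ 2 ≤ ∫ x in A..B, (deriv f x) ^ 2 := by
  have hfc : Continuous f := (hf.differentiable one_ne_zero).continuous
  have hdc : Continuous (deriv f) := hf.continuous_deriv le_rfl
  set m : ℝ := (A + B) / 2 with hm
  have hAm : A ≤ m := by rw [hm]; linarith
  have hmB : m ≤ B := by rw [hm]; linarith
  have hL1 : c * (m - A) ≤ Real.pi / 2 := by rw [hm]; nlinarith
  have hL2 : c * (B - m) ≤ Real.pi / 2 := by rw [hm]; nlinarith
  have h1 := wirt_left c A m hc hAm hL1 f hf hA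
  have h2 := wirt_right c m B hc hmB hL2 f hf hB
  have e1 : (∫ x in A..m, f x ^ 2) + ∫ x in m..B, f x ^ 2 = ∫ x in A..B, f x ^ 2 :=
    intervalIntegral.integral_add_adjacent_intervals
      ((hfc.pow 2).intervalIntegrable _ _) ((hfc.pow 2).intervalIntegrable _ _)
  have e2 : (∫ x in A..m, (deriv f x) ^ 2) + ∫ x in m..B, (deriv f x) ^ 2 =
      ∫ x in A..B, (deriv f x) ^ 2 :=
    intervalIntegral.integral_add_adjacent_intervals
      ((hdc.pow 2).intervalIntegrable _ _) ((hdc.pow 2).intervalIntegrable _ _)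
  nlinarith [h1, h2, e1, e2]

/-- Poincaré estimate on a half-line where zeros of `f` are `ℓ`-dense. -/
lemma branch (ℓ b : ℝ) (hl : 0 < ℓ) (f : ℝ → ℝ) (hf : ContDiff ℝ 1 f)
    (hfc : HasCompactSupport f)
    (H : ∀ r, b ≤ r → ∃ z, z ∈ Set.Icc r (r + ℓ) ∧ f z = 0) :
    (Real.pi / (2 * ℓ)) ^ 2 * ∫ x in Set.Ioi b, f x ^ 2 ≤
      ∫ x in Set.Ioi b, (deriv f x) ^ 2 := by
  have hπ := Real.pi_pos
  set c : ℝ := Real.pi / (2 * ℓ) with hcdef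
  have hc : 0 < c := by positivity
  have hcl : c * ℓ = Real.pi / 2 := by rw [hcdef]; field_simp
  have hfcont : Continuous f := (hf.differentiable one_ne_zero).continuous
  have hdc : Continuous (deriv f) := hf.continuous_deriv le_rfl
  have hd0 : ∀ x, x ∉ tsupport f → deriv f x = 0 := by
    intro x hx
    have hopen : (tsupport f)ᶜ ∈ nhds x :=
      (isClosed_tsupport f).isOpen_compl.mem_nhds hx
    have heq : f =ᶠ[nhds x] (fun _ => 0) := by
      filter_upwards [hopen] with y hy
      exact image_eq_zero_of_notMem_tsupport hy
    rw [heq.deriv_eq]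
    simp
  obtain ⟨M, hM⟩ : ∃ M : ℝ, tsupport f ⊆ Set.Icc (-M) M := by
    obtain ⟨r, hr⟩ := hfc.isBounded.subset_closedBall 0
    exact ⟨r, by simpa [Real.closedBall_eq_Icc] using hr⟩
  have key : ∀ r : ℝ, ∃ z, z ∈ Set.Icc (max r b) (max r b + ℓ) ∧ f z = 0 :=
    fun r => H _ (le_max_right _ _)
  set z : ℕ → ℝ := fun k =>
    Nat.rec (Classical.choose (key b)) (fun _ p => Classical.choose (key (p + ℓ))) k
    with hzdef
  have hz0 : z 0 ∈ Set.Icc (max b b) (max b b + ℓ) ∧ f (z 0) = 0 :=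
    Classical.choose_spec (key b)
  have hzsucc : ∀ k, z (k + 1) ∈ Set.Icc (max (z k + ℓ) b) (max (z k + ℓ) b + ℓ) ∧
      f (z (k + 1)) = 0 := fun k => Classical.choose_spec (key (z k + ℓ))
  have hzb : ∀ k, b ≤ z k := by
    intro k
    induction k with
    | zero => simpa [max_self] using hz0.1.1
    | succ k ih => exact le_trans (le_max_right _ _) (hzsucc k).1.1
  have hzf : ∀ k, f (z k) = 0 := by
    intro k
    cases k with
    | zero => exact hz0.2
    | succ k => exact (hzsucc k).2
  have hstep : ∀ k, z k + ℓ ≤ z (k + 1) ∧ z (k + 1) ≤ z k + 2 * ℓ := by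
    intro k
    have hmax : max (z k + ℓ) b = z k + ℓ := max_eq_left (by linarith [hzb k])
    have h := (hzsucc k).1
    rw [hmax] at h
    exact ⟨h.1, by linarith [h.2]⟩
  have hgrow : ∀ k : ℕ, b + k * ℓ ≤ z k := by
    intro k
    induction k with
    | zero => simpa [max_self] using hz0.1.1
    | succ k ih =>
      have := (hstep k).1
      push_cast
      push_cast at ih
      linarith
  have main : ∀ k, c ^ 2 * ∫ x in b..(z k), f x ^ 2 ≤
      ∫ x in b..(z k), (deriv f x) ^ 2 := by
    intro k
    induction k with
    | zero =>
      apply wirt_right c b (z 0) hc (hzb 0) ?_ f hf (hzf 0)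
      have h1 : z 0 ≤ b + ℓ := by simpa [max_self] using hz0.1.2
      nlinarith
    | succ k ih =>
      have hk1 : z k ≤ z (k + 1) := by linarith [(hstep k).1]
      have h2 := wirt_two c (z k) (z (k + 1)) hc hk1
        (by nlinarith [(hstep k).2]) f hf (hzf k) (hzf (k + 1))
      have e1 : (∫ x in b..(z k), f x ^ 2) + ∫ x in (z k)..(z (k+1)), f x ^ 2 =
          ∫ x in b..(z (k+1)), f x ^ 2 :=
        intervalIntegral.integral_add_adjacent_intervals
          ((hfcont.pow 2).intervalIntegrable _ _) ((hfcont.pow 2).intervalIntegrable _ _)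
      have e2 : (∫ x in b..(z k), (deriv f x) ^ 2) +
          ∫ x in (z k)..(z (k+1)), (deriv f x) ^ 2 =
          ∫ x in b..(z (k+1)), (deriv f x) ^ 2 :=
        intervalIntegral.integral_add_adjacent_intervals
          ((hdc.pow 2).intervalIntegrable _ _) ((hdc.pow 2).intervalIntegrable _ _)
      nlinarith [h2, ih]
  obtain ⟨k, hk⟩ : ∃ k : ℕ, M ≤ b + k * ℓ := by
    obtain ⟨k, hk⟩ := exists_nat_ge ((M - b) / ℓ)
    refine ⟨k, ?_⟩
    rw [div_le_iff₀ hl] at hk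
    linarith
  have hbZ : b ≤ z k := hzb k
  have hZM : M ≤ z k := le_trans hk (hgrow k)
  have hzero : ∀ g : ℝ → ℝ, Continuous g → (∀ x, x ∉ tsupport f → g x = 0) →
      ∫ x in Set.Ioi b, g x = ∫ x in b..(z k), g x := by
    intro g hgc hg
    have hgcs : HasCompactSupport g := HasCompactSupport.intro hfc hg
    have hgint : Integrable g := hgc.integrable_of_hasCompactSupport hgcs
    rw [intervalIntegral.integral_of_le hbZ]
    have hsplit : Set.Ioi b = Set.Ioc b (z k) ∪ Set.Ioi (z k) :=
      (Set.Ioc_union_Ioi_eq_Ioi hbZ).symm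
    rw [hsplit, setIntegral_union (Set.Ioc_disjoint_Ioi le_rfl) measurableSet_Ioi
      hgint.integrableOn hgint.integrableOn]
    have hzero2 : ∫ x in Set.Ioi (z k), g x = 0 := by
      apply setIntegral_eq_zero_of_forall_eq_zero
      intro x hx
      apply hg
      intro hmem
      have h5 := (hM hmem).2
      simp only [Set.mem_Ioi] at hx
      linarith
    rw [hzero2, add_zero]
  have ef : ∫ x in Set.Ioi b, f x ^ 2 = ∫ x in b..(z k), f x ^ 2 :=
    hzero _ (hfcont.pow 2)
      (fun x hx => by rw [image_eq_zero_of_notMem_tsupport hx]; ring)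
  have ed : ∫ x in Set.Ioi b, (deriv f x) ^ 2 = ∫ x in b..(z k), (deriv f x) ^ 2 :=
    hzero _ (hdc.pow 2) (fun x hx => by rw [hd0 x hx]; ring)
  rw [ef, ed]
  exact main k

lemma deriv_zero_nmem (f : ℝ → ℝ) (x : ℝ) (hx : x ∉ tsupport f) : deriv f x = 0 := by
  have hopen : (tsupport f)ᶜ ∈ nhds x := (isClosed_tsupport f).isOpen_compl.mem_nhds hx
  have heq : f =ᶠ[nhds x] (fun _ => 0) := by
    filter_upwards [hopen] with y hy
    exact image_eq_zero_of_notMem_tsupport hy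
  rw [heq.deriv_eq]
  simp

/-- The 1-D Poincaré estimate on the external region `{r : b < |r|}`. -/
lemma slice_est (l b : ℝ) (hl : 0 < l) (hb : 0 ≤ b) (f : ℝ → ℝ) (hf : ContDiff ℝ 1 f)
    (hfc : HasCompactSupport f)
    (Hr : ∀ r, b ≤ r → ∃ z, z ∈ Set.Icc r (r + l) ∧ f z = 0)
    (Hl : ∀ r, r ≤ -b → ∃ z, z ∈ Set.Icc (r - l) r ∧ f z = 0) :
    (Real.pi / (2 * l)) ^ 2 * ∫ x in {r : ℝ | b < |r|}, f x ^ 2 ≤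
      ∫ x in {r : ℝ | b < |r|}, (deriv f x) ^ 2 := by
  have hfcont : Continuous f := (hf.differentiable one_ne_zero).continuous
  have hdc : Continuous (deriv f) := hf.continuous_deriv le_rfl
  have hset : {r : ℝ | b < |r|} = Set.Iio (-b) ∪ Set.Ioi b := by
    ext r
    simp only [Set.mem_setOf_eq, Set.mem_union, Set.mem_Iio, Set.mem_Ioi, lt_abs]
    constructor
    · rintro (h | h)
      · right; exact h
      · left; linarith
    · rintro (h | h)
      · right; linarith
      · left; exact h
  have hIf : Integrable (fun x : ℝ => f x ^ 2) :=
    (hfcont.fun_pow 2).integrable_of_hasCompactSupport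
      (hfc.comp_left (g := fun t : ℝ => t ^ 2) (by simp))
  have hId : Integrable (fun x : ℝ => (deriv f x) ^ 2) :=
    (hdc.fun_pow 2).integrable_of_hasCompactSupport
      ((HasCompactSupport.intro hfc (fun x hx => deriv_zero_nmem f x hx)).comp_left
        (g := fun t : ℝ => t ^ 2) (by simp))
  -- right branch
  have hright := branch l b hl f hf hfc Hr
  -- left branch via reflection
  set g : ℝ → ℝ := fun x => f (-x) with hgdef
  have hgcd : ContDiff ℝ 1 g := hf.comp contDiff_neg
  have hgcs : HasCompactSupport g := hfc.comp_homeomorph (Homeomorph.neg ℝ)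
  have hgH : ∀ r, b ≤ r → ∃ z, z ∈ Set.Icc r (r + l) ∧ g z = 0 := by
    intro r hr
    obtain ⟨w, hw, hfw⟩ := Hl (-r) (by linarith)
    refine ⟨-w, ⟨by linarith [hw.2], by linarith [hw.1]⟩, ?_⟩
    simpa [hgdef] using hfw
  have hleft := branch l b hl g hgcd hgcs hgH
  have hgderiv : ∀ x, deriv g x = -deriv f (-x) := by
    intro x
    have h1 : HasDerivAt (fun y : ℝ => -y) (-1) x := by
      simpa using (hasDerivAt_id x).fun_neg
    have h2 : HasDerivAt f (deriv f (-x)) (-x) :=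
      ((hf.differentiable one_ne_zero) _).hasDerivAt
    have h3 := h2.comp x h1
    have : deriv g x = deriv f (-x) * (-1) := h3.deriv
    linarith [this]
  have e1 : ∫ x in Set.Ioi b, g x ^ 2 = ∫ x in Set.Iio (-b), f x ^ 2 := by
    have h0 := integral_comp_neg_Ioi b (fun y => f y ^ 2)
    rw [MeasureTheory.integral_Iic_eq_integral_Iio] at h0
    simpa [hgdef] using h0
  have e2 : ∫ x in Set.Ioi b, (deriv g x) ^ 2 = ∫ x in Set.Iio (-b), (deriv f x) ^ 2 := by
    have h4 : ∫ x in Set.Ioi b, (deriv g x) ^ 2 =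
        ∫ x in Set.Ioi b, (fun y => (deriv f y) ^ 2) (-x) :=
      integral_congr_ae (Filter.Eventually.of_forall fun x => by
        show (deriv g x) ^ 2 = (fun y => (deriv f y) ^ 2) (-x)
        rw [hgderiv x]; ring)
    rw [h4]
    rw [integral_comp_neg_Ioi b (fun y => (deriv f y) ^ 2)]
    exact MeasureTheory.integral_Iic_eq_integral_Iio
  rw [e1, e2] at hleft
  -- combine
  have hunion1 : ∫ x in {r : ℝ | b < |r|}, f x ^ 2 =
      (∫ x in Set.Iio (-b), f x ^ 2) + ∫ x in Set.Ioi b, f x ^ 2 := by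
    rw [hset]
    exact setIntegral_union ((Set.Iio_disjoint_Ici (by linarith : -b ≤ b)).mono_right Set.Ioi_subset_Ici_self) measurableSet_Ioi
      hIf.integrableOn hIf.integrableOn
  have hunion2 : ∫ x in {r : ℝ | b < |r|}, (deriv f x) ^ 2 =
      (∫ x in Set.Iio (-b), (deriv f x) ^ 2) + ∫ x in Set.Ioi b, (deriv f x) ^ 2 := by
    rw [hset]
    exact setIntegral_union ((Set.Iio_disjoint_Ici (by linarith : -b ≤ b)).mono_right Set.Ioi_subset_Ici_self) measurableSet_Ioi
      hId.integrableOn hId.integrableOn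
  rw [hunion1, hunion2]
  linarith

lemma omega_mem (θ : ℝ → ℝ) (ω : Set (ℝ × ℝ)) (L : ℝ × ℝ × ℝ → ℝ × ℝ × ℝ)
    (hL : ∀ x : ℝ × ℝ × ℝ, L x =
      (x.1, x.2.1 * Real.cos (θ x.1) + x.2.2 * Real.sin (θ x.1),
        -x.2.1 * Real.sin (θ x.1) + x.2.2 * Real.cos (θ x.1)))
    (p : ℝ × ℝ × ℝ) :
    p ∈ L '' (Set.univ ×ˢ ω) ↔
      (p.2.1 * Real.cos (θ p.1) - p.2.2 * Real.sin (θ p.1),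
        p.2.1 * Real.sin (θ p.1) + p.2.2 * Real.cos (θ p.1)) ∈ ω := by
  obtain ⟨r, y1, y2⟩ := p
  constructor
  · rintro ⟨⟨a, t1, t2⟩, ⟨-, ht⟩, heq⟩
    rw [hL] at heq
    simp only [Prod.mk.injEq] at heq
    obtain ⟨h1, h2, h3⟩ := heq
    subst h1
    simp only
    have hpy := Real.sin_sq_add_cos_sq (θ a)
    have e1 : y1 * Real.cos (θ a) - y2 * Real.sin (θ a) = t1 := by
      rw [← h2, ← h3]; linear_combination t1 * hpy
    have e2 : y1 * Real.sin (θ a) + y2 * Real.cos (θ a) = t2 := by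
      rw [← h2, ← h3]; linear_combination t2 * hpy
    rw [e1, e2]
    exact ht
  · intro h
    refine ⟨(r, (y1 * Real.cos (θ r) - y2 * Real.sin (θ r),
      y1 * Real.sin (θ r) + y2 * Real.cos (θ r))), ⟨Set.mem_univ _, h⟩, ?_⟩
    rw [hL]
    have hpy := Real.sin_sq_add_cos_sq (θ r)
    simp only [Prod.mk.injEq]
    refine ⟨trivial, by linear_combination y1 * hpy, by linear_combination y2 * hpy⟩

lemma vanish_right (θ : ℝ → ℝ) (hθ : ContDiff ℝ 1 θ) (ω : Set (ℝ × ℝ))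
    (hωhalf : ω ⊆ {t : ℝ × ℝ | 0 < t.1})
    (n : ℕ) (hn : 0 < n) (s : ℝ) (hs : 0 < s)
    (htheta : ∀ x1 : ℝ, s < |x1| → (n : ℝ) < |deriv θ x1|)
    (L : ℝ × ℝ × ℝ → ℝ × ℝ × ℝ)
    (hL : ∀ x : ℝ × ℝ × ℝ, L x =
      (x.1, x.2.1 * Real.cos (θ x.1) + x.2.2 * Real.sin (θ x.1),
        -x.2.1 * Real.sin (θ x.1) + x.2.2 * Real.cos (θ x.1)))
    (ψ : ℝ × ℝ × ℝ → ℝ) (hψΩ : tsupport ψ ⊆ L '' (Set.univ ×ˢ ω))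
    (y : ℝ × ℝ) (r : ℝ) (hr : s < r) :
    ∃ u ∈ Set.Icc (0 : ℝ) (Real.pi / n), ψ (r + u, y) = 0 := by
  have hπ := Real.pi_pos
  have hn' : (0:ℝ) < n := by exact_mod_cast hn
  set l : ℝ := Real.pi / n with hldef
  have hl : 0 < l := by positivity
  by_contra hcon
  push_neg at hcon
  have hpos : ∀ u ∈ Set.Icc (0:ℝ) l, 0 < y.1 * Real.cos (θ (r + u)) -
      y.2 * Real.sin (θ (r + u)) := by
    intro u hu
    have hne : ψ (r + u, y) ≠ 0 := hcon u hu
    have hmem : ((r + u, y) : ℝ × ℝ × ℝ) ∈ L '' (Set.univ ×ˢ ω) :=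
      hψΩ (subset_closure (Function.mem_support.mpr hne))
    exact hωhalf ((omega_mem θ ω L hL _).mp hmem)
  have hcont : ContinuousOn θ (Set.Icc r (r + l)) := hθ.continuous.continuousOn
  obtain ⟨ξ, hξ, hslope⟩ := exists_hasDerivAt_eq_slope θ (deriv θ)
    (show r < r + l by linarith) hcont
    (fun x _ => ((hθ.differentiable one_ne_zero) x).hasDerivAt)
  have hξs : (n : ℝ) < |deriv θ ξ| := by
    apply htheta
    rw [abs_of_pos (by linarith [hξ.1] : (0:ℝ) < ξ)]
    linarith [hξ.1]
  have hnl : (n : ℝ) * l = Real.pi := by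
    rw [hldef]; field_simp
  have hgap : Real.pi < |θ (r + l) - θ r| := by
    have hll : r + l - r = l := by ring
    rw [hslope, hll, abs_div, abs_of_pos hl] at hξs
    calc Real.pi = (n:ℝ) * l := hnl.symm
      _ < |θ (r + l) - θ r| / l * l := by
          apply mul_lt_mul_of_pos_right hξs hl
      _ = |θ (r + l) - θ r| := by field_simp
  have h0 := hpos 0 ⟨le_rfl, hl.le⟩
  rw [add_zero] at h0
  rcases le_or_gt (θ r) (θ (r + l)) with hcase | hcase
  · have habs : θ r + Real.pi < θ (r + l) := by
      rw [abs_of_nonneg (by linarith)] at hgap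
      linarith
    obtain ⟨t, ht, hθt⟩ := intermediate_value_Icc (show r ≤ r + l by linarith) hcont
      (show θ r + Real.pi ∈ Set.Icc (θ r) (θ (r + l)) by
        constructor <;> linarith)
    have h1 := hpos (t - r) ⟨by linarith [ht.1], by linarith [ht.2]⟩
    rw [show r + (t - r) = t by ring, hθt] at h1
    simp only [Real.cos_add_pi, Real.sin_add_pi] at h1
    linarith
  · have habs : θ (r + l) < θ r - Real.pi := by
      rw [abs_of_nonpos (by linarith)] at hgap
      linarith
    obtain ⟨t, ht, hθt⟩ := intermediate_value_Icc' (show r ≤ r + l by linarith) hcont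
      (show θ r - Real.pi ∈ Set.Icc (θ (r + l)) (θ r) by
        constructor <;> linarith)
    have h1 := hpos (t - r) ⟨by linarith [ht.1], by linarith [ht.2]⟩
    rw [show r + (t - r) = t by ring, hθt] at h1
    have hc : Real.cos (θ r - Real.pi) = -Real.cos (θ r) := by
      rw [Real.cos_sub]; simp
    have hsn : Real.sin (θ r - Real.pi) = -Real.sin (θ r) := by
      rw [Real.sin_sub]; simp
    rw [hc, hsn] at h1
    linarith

lemma vanish_left (θ : ℝ → ℝ) (hθ : ContDiff ℝ 1 θ) (ω : Set (ℝ × ℝ))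
    (hωhalf : ω ⊆ {t : ℝ × ℝ | 0 < t.1})
    (n : ℕ) (hn : 0 < n) (s : ℝ) (hs : 0 < s)
    (htheta : ∀ x1 : ℝ, s < |x1| → (n : ℝ) < |deriv θ x1|)
    (L : ℝ × ℝ × ℝ → ℝ × ℝ × ℝ)
    (hL : ∀ x : ℝ × ℝ × ℝ, L x =
      (x.1, x.2.1 * Real.cos (θ x.1) + x.2.2 * Real.sin (θ x.1),
        -x.2.1 * Real.sin (θ x.1) + x.2.2 * Real.cos (θ x.1)))
    (ψ : ℝ × ℝ × ℝ → ℝ) (hψΩ : tsupport ψ ⊆ L '' (Set.univ ×ˢ ω))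
    (y : ℝ × ℝ) (r : ℝ) (hr : r < -s) :
    ∃ u ∈ Set.Icc (-(Real.pi / n)) (0 : ℝ), ψ (r + u, y) = 0 := by
  have hπ := Real.pi_pos
  have hn' : (0:ℝ) < n := by exact_mod_cast hn
  set l : ℝ := Real.pi / n with hldef
  have hl : 0 < l := by positivity
  by_contra hcon
  push_neg at hcon
  have hpos : ∀ u ∈ Set.Icc (-l) (0:ℝ), 0 < y.1 * Real.cos (θ (r + u)) -
      y.2 * Real.sin (θ (r + u)) := by
    intro u hu
    have hne : ψ (r + u, y) ≠ 0 := hcon u hu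
    have hmem : ((r + u, y) : ℝ × ℝ × ℝ) ∈ L '' (Set.univ ×ˢ ω) :=
      hψΩ (subset_closure (Function.mem_support.mpr hne))
    exact hωhalf ((omega_mem θ ω L hL _).mp hmem)
  have hcont : ContinuousOn θ (Set.Icc (r - l) r) := hθ.continuous.continuousOn
  obtain ⟨ξ, hξ, hslope⟩ := exists_hasDerivAt_eq_slope θ (deriv θ)
    (show r - l < r by linarith) hcont
    (fun x _ => ((hθ.differentiable one_ne_zero) x).hasDerivAt)
  have hξs : (n : ℝ) < |deriv θ ξ| := by
    apply htheta
    rw [abs_of_neg (by linarith [hξ.2] : ξ < 0)]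
    linarith [hξ.2]
  have hnl : (n : ℝ) * l = Real.pi := by
    rw [hldef]; field_simp
  have hgap : Real.pi < |θ r - θ (r - l)| := by
    have hll : r - (r - l) = l := by ring
    rw [hslope, hll, abs_div, abs_of_pos hl] at hξs
    calc Real.pi = (n:ℝ) * l := hnl.symm
      _ < |θ r - θ (r - l)| / l * l := by
          apply mul_lt_mul_of_pos_right hξs hl
      _ = |θ r - θ (r - l)| := by field_simp
  have h0 := hpos 0 ⟨by linarith, le_rfl⟩
  rw [add_zero] at h0
  rcases le_or_gt (θ (r - l)) (θ r) with hcase | hcase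
  · have habs : θ (r - l) < θ r - Real.pi := by
      rw [abs_of_nonneg (by linarith)] at hgap
      linarith
    obtain ⟨t, ht, hθt⟩ := intermediate_value_Icc (show r - l ≤ r by linarith) hcont
      (show θ r - Real.pi ∈ Set.Icc (θ (r - l)) (θ r) by
        constructor <;> linarith)
    have h1 := hpos (t - r) ⟨by linarith [ht.1], by linarith [ht.2]⟩
    rw [show r + (t - r) = t by ring, hθt] at h1
    have hc : Real.cos (θ r - Real.pi) = -Real.cos (θ r) := by
      rw [Real.cos_sub]; simp
    have hsn : Real.sin (θ r - Real.pi) = -Real.sin (θ r) := by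
      rw [Real.sin_sub]; simp
    rw [hc, hsn] at h1
    linarith
  · have habs : θ r + Real.pi < θ (r - l) := by
      rw [abs_of_nonpos (by linarith)] at hgap
      linarith
    obtain ⟨t, ht, hθt⟩ := intermediate_value_Icc' (show r - l ≤ r by linarith) hcont
      (show θ r + Real.pi ∈ Set.Icc (θ r) (θ (r - l)) by
        constructor <;> linarith)
    have h1 := hpos (t - r) ⟨by linarith [ht.1], by linarith [ht.2]⟩
    rw [show r + (t - r) = t by ring, hθt] at h1
    simp only [Real.cos_add_pi, Real.sin_add_pi] at h1
    linarith

/-- Longitudinal Dirichlet estimate in the external region of a twisted tube with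
`|θ'| > n` for `|x₁| > sₙ`: test functions vanish on both sides within longitudinal
distance `π/n`, and the longitudinal kinetic energy dominates `(n/2)²` times the mass. -/
theorem stmt12 (θ : ℝ → ℝ) (hθ : ContDiff ℝ 1 θ) (ω : Set (ℝ × ℝ)) (hω : IsOpen ω)
    (hωhalf : ω ⊆ {t : ℝ × ℝ | 0 < t.1})
    (n : ℕ) (hn : 0 < n) (s : ℝ) (hs : 0 < s)
    (htheta : ∀ x1 : ℝ, s < |x1| → (n : ℝ) < |deriv θ x1|)
    (L : ℝ × ℝ × ℝ → ℝ × ℝ × ℝ)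
    (hL : ∀ x : ℝ × ℝ × ℝ, L x =
      (x.1, x.2.1 * Real.cos (θ x.1) + x.2.2 * Real.sin (θ x.1),
        -x.2.1 * Real.sin (θ x.1) + x.2.2 * Real.cos (θ x.1)))
    (ψ : ℝ × ℝ × ℝ → ℝ) (hψ : ContDiff ℝ (⊤ : ℕ∞) ψ) (hψc : HasCompactSupport ψ)
    (hψΩ : tsupport ψ ⊆ L '' (Set.univ ×ˢ ω)) :
    (∀ x ∈ L '' (Set.univ ×ˢ ω), s + Real.pi / n < |x.1| →
      (∃ u ∈ Set.Icc (-(Real.pi / n)) (0 : ℝ), ψ (x.1 + u, x.2) = 0) ∧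
      (∃ u ∈ Set.Icc (0 : ℝ) (Real.pi / n), ψ (x.1 + u, x.2) = 0)) ∧
    ((n : ℝ) / 2) ^ 2 *
        (∫ x in {x : ℝ × ℝ × ℝ | s + Real.pi / n < |x.1|} ∩ L '' (Set.univ ×ˢ ω),
          (ψ x) ^ 2) ≤
      ∫ x in {x : ℝ × ℝ × ℝ | s + Real.pi / n < |x.1|} ∩ L '' (Set.univ ×ˢ ω),
        (deriv (fun r : ℝ => ψ (r, x.2)) x.1) ^ 2 := by
  have hπ := Real.pi_pos
  have hn' : (0:ℝ) < n := by exact_mod_cast hn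
  set l : ℝ := Real.pi / n with hldef
  have hl : 0 < l := by positivity
  set b : ℝ := s + l with hbdef
  have hb0 : (0:ℝ) ≤ b := by positivity
  constructor
  · -- Part 1 : vanishing on both sides
    intro x hx hgt
    have hcases : b < x.1 ∨ x.1 < -b := by
      rcases lt_abs.mp hgt with h | h
      · left; exact h
      · right; linarith
    constructor
    · rcases hcases with h | h
      · obtain ⟨u, hu, hu0⟩ := vanish_right θ hθ ω hωhalf n hn s hs htheta L hL ψ hψΩ
          x.2 (x.1 - l) (by linarith)
        exact ⟨u - l, ⟨by linarith [hu.1], by linarith [hu.2]⟩, by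
          rw [show x.1 + (u - l) = x.1 - l + u by ring]; exact hu0⟩
      · exact vanish_left θ hθ ω hωhalf n hn s hs htheta L hL ψ hψΩ x.2 x.1
          (by linarith)
    · rcases hcases with h | h
      · exact vanish_right θ hθ ω hωhalf n hn s hs htheta L hL ψ hψΩ x.2 x.1
          (by linarith)
      · obtain ⟨u, hu, hu0⟩ := vanish_left θ hθ ω hωhalf n hn s hs htheta L hL ψ hψΩ
          x.2 (x.1 + l) (by linarith)
        exact ⟨u + l, ⟨by linarith [hu.1], by linarith [hu.2]⟩, by
          rw [show x.1 + (u + l) = x.1 + l + u by ring]; exact hu0⟩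
  · -- Part 2 : the Poincaré estimate
    have hψcont : Continuous ψ := hψ.continuous
    have hψd : Differentiable ℝ ψ := hψ.differentiable (by simp)
    set Ω : Set (ℝ × ℝ × ℝ) := L '' (Set.univ ×ˢ ω) with hΩdef
    set D : ℝ × ℝ × ℝ → ℝ := fun x => fderiv ℝ ψ x (1, (0 : ℝ × ℝ)) with hDdef
    have hDcont : Continuous D :=
      (hψ.continuous_fderiv (by simp)).clm_apply continuous_const
    have hD0 : ∀ x, x ∉ tsupport ψ → D x = 0 := by
      intro x hx
      have hopen : (tsupport ψ)ᶜ ∈ nhds x :=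
        (isClosed_tsupport ψ).isOpen_compl.mem_nhds hx
      have heq : ψ =ᶠ[nhds x] (fun _ => 0) := by
        filter_upwards [hopen] with z hz
        exact image_eq_zero_of_notMem_tsupport hz
      have : fderiv ℝ ψ x = fderiv ℝ (fun _ : ℝ × ℝ × ℝ => (0:ℝ)) x := heq.fderiv_eq
      rw [hDdef]
      simp only [this, fderiv_const]
      simp
    have hder : ∀ (r : ℝ) (y : ℝ × ℝ), deriv (fun t : ℝ => ψ (t, y)) r = D (r, y) := by
      intro r y
      have h1 : HasDerivAt (fun t : ℝ => ((t, y) : ℝ × ℝ × ℝ)) (1, (0 : ℝ × ℝ)) r :=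
        (hasDerivAt_id r).prodMk (hasDerivAt_const r y)
      have h2 : HasFDerivAt ψ (fderiv ℝ ψ (r, y)) (r, y) := (hψd (r, y)).hasFDerivAt
      exact (h2.comp_hasDerivAt r h1).deriv
    -- sets
    set A : Set ℝ := {r : ℝ | b < |r|} with hAdef
    set T : Set (ℝ × ℝ × ℝ) := {x : ℝ × ℝ × ℝ | b < |x.1|} with hTdef
    have hAopen : IsOpen A := isOpen_lt continuous_const continuous_abs
    have hTopen : IsOpen T := by
      have : T = Prod.fst ⁻¹' A := rfl
      rw [this]
      exact hAopen.preimage continuous_fst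
    have hΩopen : IsOpen Ω := by
      have hMc : Continuous (fun p : ℝ × ℝ × ℝ =>
          ((p.2.1 * Real.cos (θ p.1) - p.2.2 * Real.sin (θ p.1),
            p.2.1 * Real.sin (θ p.1) + p.2.2 * Real.cos (θ p.1)) : ℝ × ℝ)) := by
        have hθc : Continuous θ := hθ.continuous
        fun_prop
      have : Ω = (fun p : ℝ × ℝ × ℝ =>
          ((p.2.1 * Real.cos (θ p.1) - p.2.2 * Real.sin (θ p.1),
            p.2.1 * Real.sin (θ p.1) + p.2.2 * Real.cos (θ p.1)) : ℝ × ℝ)) ⁻¹' ω :=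
        Set.ext fun p => omega_mem θ ω L hL p
      rw [this]
      exact hω.preimage hMc
    -- integrability
    have hψ2cs : HasCompactSupport (fun x => ψ x ^ 2) :=
      hψc.comp_left (g := fun t : ℝ => t ^ 2) (by simp)
    have hDcs : HasCompactSupport D := HasCompactSupport.intro hψc hD0
    have hD2cs : HasCompactSupport (fun x => D x ^ 2) :=
      hDcs.comp_left (g := fun t : ℝ => t ^ 2) (by simp)
    have hIψ2 : Integrable (fun x : ℝ × ℝ × ℝ => ψ x ^ 2) :=
      (hψcont.fun_pow 2).integrable_of_hasCompactSupport hψ2cs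
    have hID2 : Integrable (fun x : ℝ × ℝ × ℝ => D x ^ 2) :=
      (hDcont.fun_pow 2).integrable_of_hasCompactSupport hD2cs
    -- drop the intersection with Ω
    have hred : ∀ g : ℝ × ℝ × ℝ → ℝ, Integrable g → (∀ x, x ∉ Ω → g x = 0) →
        ∫ x in T ∩ Ω, g x = ∫ x in T, g x := by
      intro g hint hg0
      have hdisj : Disjoint (T ∩ Ω) (T \ Ω) :=
        Set.disjoint_sdiff_right.mono_left Set.inter_subset_right
      have hsplit : (T ∩ Ω) ∪ (T \ Ω) = T := Set.inter_union_diff T Ω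
      have h1 : ∫ x in (T ∩ Ω) ∪ (T \ Ω), g x =
          (∫ x in T ∩ Ω, g x) + ∫ x in T \ Ω, g x :=
        setIntegral_union hdisj (hTopen.measurableSet.diff hΩopen.measurableSet)
          hint.integrableOn hint.integrableOn
      have h2 : ∫ x in T \ Ω, g x = 0 :=
        setIntegral_eq_zero_of_forall_eq_zero fun x hx => hg0 x hx.2
      conv_rhs => rw [← hsplit]
      rw [h1, h2, add_zero]
    have hgoalred1 : ∫ x in T ∩ Ω, ψ x ^ 2 = ∫ x in T, ψ x ^ 2 :=
      hred _ hIψ2 (fun x hx => by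
        rw [image_eq_zero_of_notMem_tsupport (fun hmem => hx (hψΩ hmem))]; ring)
    have hgoalred2 : ∫ x in T ∩ Ω, D x ^ 2 = ∫ x in T, D x ^ 2 :=
      hred _ hID2 (fun x hx => by
        rw [hD0 x (fun hmem => hx (hψΩ hmem))]; ring)
    -- rewrite the derivative integrand as D
    simp only [hder]
    rw [hgoalred1, hgoalred2]
    -- constant identification
    have hceq : ((n : ℝ) / 2) = Real.pi / (2 * l) := by
      rw [hldef]
      rw [div_eq_div_iff (by norm_num) (by positivity)]
      field_simp
    have hTmeas := hTopen.measurableSet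
    have hAmeas := hAopen.measurableSet
    have hindi : ∀ (g : ℝ × ℝ × ℝ → ℝ) (y : ℝ × ℝ) (r : ℝ),
        T.indicator g (r, y) = A.indicator (fun t => g (t, y)) r := by
      intro g y r
      by_cases hr : b < |r|
      · rw [Set.indicator_of_mem (show ((r, y) : ℝ × ℝ × ℝ) ∈ T from hr),
          Set.indicator_of_mem (show r ∈ A from hr)]
      · rw [Set.indicator_of_notMem (show ((r, y) : ℝ × ℝ × ℝ) ∉ T from hr),
          Set.indicator_of_notMem (show r ∉ A from hr)]
    have hfub : ∀ g : ℝ × ℝ × ℝ → ℝ, Integrable g →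
        ∫ x in T, g x = ∫ y : ℝ × ℝ, ∫ r : ℝ, T.indicator g (r, y) := by
      intro g hint
      have hPint : Integrable (T.indicator g) := hint.indicator hTmeas
      rw [← MeasureTheory.integral_indicator hTmeas]
      rw [MeasureTheory.Measure.volume_eq_prod] at hPint ⊢
      rw [MeasureTheory.integral_prod _ hPint]
      exact MeasureTheory.integral_integral_swap hPint
    rw [hfub _ hIψ2, hfub _ hID2, ← MeasureTheory.integral_const_mul]
    have hPprod : Integrable (T.indicator fun x => ψ x ^ 2)
        ((volume : Measure ℝ).prod (volume : Measure (ℝ × ℝ))) := by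
      rw [← MeasureTheory.Measure.volume_eq_prod]
      exact hIψ2.indicator hTmeas
    have hQprod : Integrable (T.indicator fun x => D x ^ 2)
        ((volume : Measure ℝ).prod (volume : Measure (ℝ × ℝ))) := by
      rw [← MeasureTheory.Measure.volume_eq_prod]
      exact hID2.indicator hTmeas
    apply MeasureTheory.integral_mono
    · exact (hPprod.integral_prod_right).const_mul _
    · exact hQprod.integral_prod_right
    intro y
    simp only
    have e1 : ∫ r : ℝ, T.indicator (fun x => ψ x ^ 2) (r, y) =
        ∫ r in A, ψ (r, y) ^ 2 := by
      rw [← MeasureTheory.integral_indicator hAmeas]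
      exact integral_congr_ae (Filter.Eventually.of_forall fun r => hindi _ y r)
    have e2 : ∫ r : ℝ, T.indicator (fun x => D x ^ 2) (r, y) =
        ∫ r in A, D (r, y) ^ 2 := by
      rw [← MeasureTheory.integral_indicator hAmeas]
      exact integral_congr_ae (Filter.Eventually.of_forall fun r => hindi _ y r)
    rw [e1, e2, hceq]
    -- slice function facts
    have hfC : ContDiff ℝ 1 (fun r : ℝ => ψ (r, y)) :=
      (hψ.of_le (by simp)).comp (contDiff_id.prodMk contDiff_const)
    have hfcs : HasCompactSupport (fun r : ℝ => ψ (r, y)) := by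
      apply HasCompactSupport.intro (hψc.image continuous_fst)
      intro r hr
      by_contra hne
      exact hr ⟨(r, y), subset_closure (Function.mem_support.mpr hne), rfl⟩
    have Hr : ∀ r, b ≤ r → ∃ z, z ∈ Set.Icc r (r + l) ∧ ψ (z, y) = 0 := by
      intro r hrr
      obtain ⟨u, hu, hu0⟩ := vanish_right θ hθ ω hωhalf n hn s hs htheta L hL ψ hψΩ
        y r (by simp only [hbdef] at hrr; linarith)
      exact ⟨r + u, ⟨by linarith [hu.1], by linarith [hu.2]⟩, hu0⟩
    have Hl : ∀ r, r ≤ -b → ∃ z, z ∈ Set.Icc (r - l) r ∧ ψ (z, y) = 0 := by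
      intro r hrr
      obtain ⟨u, hu, hu0⟩ := vanish_left θ hθ ω hωhalf n hn s hs htheta L hL ψ hψΩ
        y r (by simp only [hbdef] at hrr; linarith)
      exact ⟨r + u, ⟨by linarith [hu.1], by linarith [hu.2]⟩, hu0⟩
    have hsl := slice_est l b hl hb0 (fun r : ℝ => ψ (r, y)) hfC hfcs Hr Hl
    rw [← hAdef] at hsl
    simp only [hder] at hsl
    exact hsl
end
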